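/- Suppose two LPs related by a stable partition pair both have finite optimal value. Let x and x' be their respective optimal solutions of smallest Euclidean norm. Then x = x'. In particular, x is constant on each column block J_q of the stable partition. -/

import Mathlib

/-- Constraint relation `∘ᵢ ∈ {≤, =, ≥}`. -/
def cRel : Ordering → ℝ → ℝ → Prop
  | Ordering.lt => fun a b => a ≤ b
  | Ordering.eq => fun a b => a = b
  | Ordering.gt => fun a b => a ≥ b

/-- Feasibility of `x` for the LP with data `(A, b, l, u, ∘)`:
`Ax ∘ b` componentwise and `l ≤ x ≤ u`. -/
def Feas {m n : ℕ} (A : Fin m → Fin n → ℝ) (b : Fin m → ℝ) (l u : Fin n → ℝ)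
    (o : Fin m → Ordering) (x : Fin n → ℝ) : Prop :=
  (∀ i, cRel (o i) (∑ j, A i j * x j) (b i)) ∧ ∀ j, l j ≤ x j ∧ x j ≤ u j

/-- Block average of `x` over the column partition given by the fibers of `κ`. -/
noncomputable def blockAvg {n t : ℕ} (κ : Fin n → Fin t) (x : Fin n → ℝ) : Fin n → ℝ :=
  fun j => (∑ j' ∈ Finset.univ.filter (fun j' => κ j' = κ j), x j') /
    (Finset.univ.filter (fun j' => κ j' = κ j)).card

/-!
Block averaging over the column partition is the orthogonal projection onto block-constant
vectors. The stable-partition conditions make it send feasible points of either LP to feasible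
points of both (each constraint value becomes an average over a row block) while preserving the
objective, so it maps each optimal set into both optimal sets without increasing the norm.
Since the Euclidean norm is strictly convex, a convex set has at most one point of minimal
norm; this forces `x` to equal its block average, hence to be optimal for the second LP, and
then `‖x‖ = ‖x'‖` forces `x = x'`.
-/

open Finset Set

theorem Convex.eq_of_isMinOn_norm {E : Type*} [NormedAddCommGroup E] [NormedSpace ℝ E]
    [StrictConvexSpace ℝ E] {S : Set E} (hS : Convex ℝ S) {x y : E} (hx : x ∈ S) (hy : y ∈ S)
    (hxmin : IsMinOn norm S x) (hymin : IsMinOn norm S y) : x = y := by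
  by_contra hne
  have hxy : ‖x‖ = ‖y‖ := le_antisymm (hxmin hy) (hymin hx)
  have hmid : (1 / 2 : ℝ) • (x + y) ∈ S := by
    rw [smul_add]; exact hS hx hy (by norm_num) (by norm_num) (by norm_num)
  exact ((norm_midpoint_lt_iff hxy).2 hne).not_ge (hxmin hmid)

theorem eq_of_isMinOn_norm_of_mapsTo {E : Type*} [NormedAddCommGroup E] [NormedSpace ℝ E]
    [StrictConvexSpace ℝ E] {S S' : Set E} (hS : Convex ℝ S) (hS' : Convex ℝ S') {P : E → E}
    (hP : ∀ y, ‖P y‖ ≤ ‖y‖) (hSS : MapsTo P S S) (hSS' : MapsTo P S S') (hS'S : MapsTo P S' S)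
    {x x' : E} (hx : x ∈ S) (hx' : x' ∈ S') (hxmin : IsMinOn norm S x)
    (hx'min : IsMinOn norm S' x') : P x = x ∧ x = x' := by
  have hPx : P x = x :=
    hS.eq_of_isMinOn_norm (hSS hx) hx (fun y hy => (hP x).trans (hxmin hy)) hxmin
  have hxx' : ‖x‖ ≤ ‖x'‖ := (hxmin (hS'S hx')).trans (hP x')
  exact ⟨hPx, hS'.eq_of_isMinOn_norm (hPx ▸ hSS' hx) hx' (fun y hy => hxx'.trans (hx'min hy))
    hx'min⟩

lemma convex_setOf_cRel (o : Ordering) (β : ℝ) : Convex ℝ {v | cRel o v β} := by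
  cases o
  exacts [convex_Iic β, convex_singleton β, convex_Ici β]

section BlockAverage

variable {n t : ℕ} (κ : Fin n → Fin t)

lemma blockAvg_congr (x : Fin n → ℝ) {j j' : Fin n} (h : κ j = κ j') :
    blockAvg κ x j = blockAvg κ x j' := by
  simp only [blockAvg, h]

lemma blockAvg_mem {S : Set ℝ} (hS : Convex ℝ S) {x : Fin n → ℝ} {j : Fin n}
    (hx : ∀ j', κ j' = κ j → x j' ∈ S) : blockAvg κ x j ∈ S := by
  set B := univ.filter fun j' => κ j' = κ j
  have hB : (B.card : ℝ) ≠ 0 := by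
    have : 0 < B.card := card_pos.2 ⟨j, mem_filter.2 ⟨mem_univ j, rfl⟩⟩
    positivity
  have havg : blockAvg κ x j = ∑ j' ∈ B, (B.card : ℝ)⁻¹ • x j' := by
    rw [← smul_sum, smul_eq_mul, inv_mul_eq_div]; rfl
  rw [havg]
  refine hS.sum_mem (fun _ _ => by positivity) ?_ fun j' hj' => hx j' (mem_filter.1 hj').2
  rw [sum_const, nsmul_eq_mul, mul_inv_cancel₀ hB]

lemma blockAvg_eq_of_forall {x : Fin n → ℝ} {j : Fin n} {a : ℝ}
    (hx : ∀ j', κ j' = κ j → x j' = a) : blockAvg κ x j = a :=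
  blockAvg_mem κ (convex_singleton a) hx

lemma blockAvg_eq_self {c : Fin n → ℝ} (hc : ∀ j j', κ j = κ j' → c j = c j') :
    blockAvg κ c = c :=
  funext fun j => blockAvg_eq_of_forall κ fun j' hj' => hc j' j hj'

lemma sum_mul_blockAvg_comm (x y : Fin n → ℝ) :
    ∑ j, x j * blockAvg κ y j = ∑ j, blockAvg κ x j * y j := by
  simp only [blockAvg, mul_div_assoc', div_mul_eq_mul_div, mul_sum, sum_mul, sum_div, sum_filter]
  rw [sum_comm]
  refine sum_congr rfl fun j _ => sum_congr rfl fun j' _ => ?_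
  by_cases h : κ j = κ j'
  · simp only [h, if_true]
  · simp only [h, Ne.symm h, if_false, mul_zero, zero_mul, zero_div]

lemma sum_mul_blockAvg_of_blockConst {c : Fin n → ℝ} (hc : ∀ j j', κ j = κ j' → c j = c j')
    (x : Fin n → ℝ) : ∑ j, c j * blockAvg κ x j = ∑ j, c j * x j := by
  rw [sum_mul_blockAvg_comm, blockAvg_eq_self κ hc]

lemma norm_toLp_blockAvg_le (x : EuclideanSpace ℝ (Fin n)) :
    ‖WithLp.toLp 2 (blockAvg κ x)‖ ≤ ‖x‖ := by
  set y : EuclideanSpace ℝ (Fin n) := WithLp.toLp 2 (blockAvg κ x)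
  have hy : ‖y‖ ^ 2 = inner ℝ y x := by
    rw [← real_inner_self_eq_norm_sq]
    simp only [PiLp.inner_apply, Real.inner_apply]
    conv_lhs => rw [sum_mul_blockAvg_comm, blockAvg_eq_self κ fun j j' h => blockAvg_congr κ x h]
  have := real_inner_le_norm y x
  nlinarith [norm_nonneg y, norm_nonneg x]

variable {m s : ℕ} (ρ : Fin m → Fin s)

lemma blockAvg_blockAvg_comm (M : Fin m → Fin n → ℝ) (i : Fin m) (j : Fin n) :
    blockAvg ρ (fun i' => blockAvg κ (M i') j) i =
      blockAvg κ (fun j' => blockAvg ρ (fun i' => M i' j') i) j := by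
  simp only [blockAvg, ← sum_div]
  rw [sum_comm, div_div, div_div, mul_comm]

lemma blockAvg_sum_mul (M : Fin m → Fin n → ℝ) (x : Fin n → ℝ) (i : Fin m) :
    blockAvg ρ (fun i' => ∑ j, M i' j * x j) i = ∑ j, blockAvg ρ (fun i' => M i' j) i * x j := by
  simp only [blockAvg, sum_div, div_mul_eq_mul_div, sum_mul]
  exact sum_comm

end BlockAverage

section LinearProgram

variable {m n s t : ℕ}

-- In matrix form `A' P = R A`, with `P` and `R` the column and row block averagings.
lemma sum_mul_blockAvg_eq_blockAvg {A A' : Fin m → Fin n → ℝ} (ρ : Fin m → Fin s)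
    (κ : Fin n → Fin t)
    (hrow : ∀ i i', ρ i = ρ i' → ∀ q,
      ∑ j ∈ univ.filter (fun j => κ j = q), A' i j = ∑ j ∈ univ.filter (fun j => κ j = q), A i' j)
    (hcol : ∀ j j', κ j = κ j' → ∀ p,
      ∑ i ∈ univ.filter (fun i => ρ i = p), A i j = ∑ i ∈ univ.filter (fun i => ρ i = p), A i j')
    (x : Fin n → ℝ) (i : Fin m) :
    ∑ j, A' i j * blockAvg κ x j = blockAvg ρ (fun i' => ∑ j, A i' j * x j) i := by
  have hA' : blockAvg κ (A' i) = fun j => blockAvg ρ (fun i' => A i' j) i := by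
    funext j
    calc blockAvg κ (A' i) j = blockAvg ρ (fun i' => blockAvg κ (A i') j) i :=
          (blockAvg_eq_of_forall ρ fun i' hi' => by simp only [blockAvg, hrow i i' hi'.symm]).symm
      _ = blockAvg κ (fun j' => blockAvg ρ (fun i' => A i' j') i) j :=
          blockAvg_blockAvg_comm κ ρ A i j
      _ = blockAvg ρ (fun i' => A i' j) i :=
          blockAvg_eq_of_forall κ fun j' hj' => by simp only [blockAvg, hcol j' j hj' (ρ i)]
  rw [sum_mul_blockAvg_comm, hA', blockAvg_sum_mul]

lemma feas_blockAvg {A A' : Fin m → Fin n → ℝ} {b : Fin m → ℝ} {l u : Fin n → ℝ}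
    {o : Fin m → Ordering} (ρ : Fin m → Fin s) (κ : Fin n → Fin t)
    (hbo : ∀ i i', ρ i = ρ i' → b i = b i' ∧ o i = o i')
    (hlu : ∀ j j', κ j = κ j' → l j = l j' ∧ u j = u j')
    (hrow : ∀ i i', ρ i = ρ i' → ∀ q,
      ∑ j ∈ univ.filter (fun j => κ j = q), A' i j = ∑ j ∈ univ.filter (fun j => κ j = q), A i' j)
    (hcol : ∀ j j', κ j = κ j' → ∀ p,
      ∑ i ∈ univ.filter (fun i => ρ i = p), A i j = ∑ i ∈ univ.filter (fun i => ρ i = p), A i j')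
    {x : Fin n → ℝ} (hx : Feas A b l u o x) : Feas A' b l u o (blockAvg κ x) := by
  refine ⟨fun i => ?_, fun j => ?_⟩
  · rw [sum_mul_blockAvg_eq_blockAvg ρ κ hrow hcol]
    refine blockAvg_mem ρ (convex_setOf_cRel (o i) (b i)) fun i' hi' => ?_
    obtain ⟨hb, ho⟩ := hbo i' i hi'
    rw [← hb, ← ho]
    exact hx.1 i'
  · refine blockAvg_mem κ (convex_Icc (l j) (u j)) fun j' hj' => ?_
    obtain ⟨hl, hu⟩ := hlu j' j hj'
    rw [Set.mem_Icc, ← hl, ← hu]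
    exact hx.2 j'

lemma sum_mul_add_smul (w : Fin n → ℝ) (x y : EuclideanSpace ℝ (Fin n)) (a β : ℝ) :
    ∑ j, w j * (a • x + β • y) j = a * ∑ j, w j * x j + β * ∑ j, w j * y j := by
  simp only [PiLp.add_apply, PiLp.smul_apply, smul_eq_mul, mul_sum, ← sum_add_distrib]
  exact sum_congr rfl fun j _ => by ring

lemma convex_setOf_feas (A : Fin m → Fin n → ℝ) (b : Fin m → ℝ) (l u : Fin n → ℝ)
    (o : Fin m → Ordering) : Convex ℝ {x : EuclideanSpace ℝ (Fin n) | Feas A b l u o x} := by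
  intro x hx y hy a β ha hβ hab
  refine ⟨fun i => ?_, fun j => ?_⟩
  · rw [sum_mul_add_smul]
    exact convex_setOf_cRel (o i) (b i) (hx.1 i) (hy.1 i) ha hβ hab
  · exact convex_Icc (l j) (u j) (hx.2 j) (hy.2 j) ha hβ hab

def lpOptimalSet (A : Fin m → Fin n → ℝ) (b : Fin m → ℝ) (c l u : Fin n → ℝ)
    (o : Fin m → Ordering) : Set (EuclideanSpace ℝ (Fin n)) :=
  {y | Feas A b l u o y ∧
    ∀ z : EuclideanSpace ℝ (Fin n), Feas A b l u o z → ∑ j, c j * y j ≤ ∑ j, c j * z j}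

lemma convex_lpOptimalSet (A : Fin m → Fin n → ℝ) (b : Fin m → ℝ) (c l u : Fin n → ℝ)
    (o : Fin m → Ordering) : Convex ℝ (lpOptimalSet A b c l u o) := by
  rintro x ⟨hx, hxopt⟩ y ⟨hy, hyopt⟩ a β ha hβ hab
  refine ⟨convex_setOf_feas A b l u o hx hy ha hβ hab, fun z hz => ?_⟩
  rw [sum_mul_add_smul]
  calc a * ∑ j, c j * x j + β * ∑ j, c j * y j
      ≤ a * ∑ j, c j * z j + β * ∑ j, c j * z j :=
        add_le_add (mul_le_mul_of_nonneg_left (hxopt z hz) ha)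
          (mul_le_mul_of_nonneg_left (hyopt z hz) hβ)
    _ = ∑ j, c j * z j := by rw [← add_mul, hab, one_mul]

lemma mapsTo_lpOptimalSet {A A' : Fin m → Fin n → ℝ} {b : Fin m → ℝ} {c l u : Fin n → ℝ}
    {o : Fin m → Ordering} {P : EuclideanSpace ℝ (Fin n) → EuclideanSpace ℝ (Fin n)}
    (hP : ∀ y : EuclideanSpace ℝ (Fin n), Feas A b l u o y → Feas A' b l u o (P y))
    (hP' : ∀ z : EuclideanSpace ℝ (Fin n), Feas A' b l u o z → Feas A b l u o (P z))
    (hc : ∀ y, ∑ j, c j * P y j = ∑ j, c j * y j) :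
    MapsTo P (lpOptimalSet A b c l u o) (lpOptimalSet A' b c l u o) := by
  rintro y ⟨hy, hyopt⟩
  refine ⟨hP y hy, fun z hz => ?_⟩
  rw [hc, ← hc z]
  exact hyopt _ (hP' z hz)

end LinearProgram

theorem stmt6_general {m n s t : ℕ}
    (A Ahat : Fin m → Fin n → ℝ) (b bhat : Fin m → ℝ)
    (c chat l lhat u uhat : Fin n → ℝ) (o ohat : Fin m → Ordering)
    (ρ : Fin m → Fin s) (κ : Fin n → Fin t)
    (hb : ∀ i, b i = bhat i) (ho : ∀ i, o i = ohat i)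
    (hVconst : ∀ i i', ρ i = ρ i' → b i = b i' ∧ o i = o i')
    (hc : ∀ j, c j = chat j) (hl : ∀ j, l j = lhat j) (hu : ∀ j, u j = uhat j)
    (hWconst : ∀ j j', κ j = κ j' → c j = c j' ∧ l j = l j' ∧ u j = u j')
    (hrow : ∀ i i', ρ i = ρ i' → ∀ q,
      ∑ j ∈ Finset.univ.filter (fun j => κ j = q), A i j =
      ∑ j ∈ Finset.univ.filter (fun j => κ j = q), A i' j)
    (hrowhat : ∀ i q,
      ∑ j ∈ Finset.univ.filter (fun j => κ j = q), A i j =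
      ∑ j ∈ Finset.univ.filter (fun j => κ j = q), Ahat i j)
    (hcol : ∀ j j', κ j = κ j' → ∀ p,
      ∑ i ∈ Finset.univ.filter (fun i => ρ i = p), A i j =
      ∑ i ∈ Finset.univ.filter (fun i => ρ i = p), A i j')
    (hcolhat : ∀ j p,
      ∑ i ∈ Finset.univ.filter (fun i => ρ i = p), A i j =
      ∑ i ∈ Finset.univ.filter (fun i => ρ i = p), Ahat i j)
    (x x' : EuclideanSpace ℝ (Fin n))
    (hxfeas : Feas A b l u o x)
    (hxopt : ∀ y : EuclideanSpace ℝ (Fin n), Feas A b l u o y →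
      ∑ j, c j * x j ≤ ∑ j, c j * y j)
    (hxmin : ∀ y : EuclideanSpace ℝ (Fin n), Feas A b l u o y →
      (∀ z : EuclideanSpace ℝ (Fin n), Feas A b l u o z →
        ∑ j, c j * y j ≤ ∑ j, c j * z j) → ‖x‖ ≤ ‖y‖)
    (hx'feas : Feas Ahat bhat lhat uhat ohat x')
    (hx'opt : ∀ y : EuclideanSpace ℝ (Fin n), Feas Ahat bhat lhat uhat ohat y →
      ∑ j, chat j * x' j ≤ ∑ j, chat j * y j)
    (hx'min : ∀ y : EuclideanSpace ℝ (Fin n), Feas Ahat bhat lhat uhat ohat y →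
      (∀ z : EuclideanSpace ℝ (Fin n), Feas Ahat bhat lhat uhat ohat z →
        ∑ j, chat j * y j ≤ ∑ j, chat j * z j) → ‖x'‖ ≤ ‖y‖) :
    x = x' ∧ ∀ j j', κ j = κ j' → x j = x j' := by
  obtain rfl : b = bhat := funext hb
  obtain rfl : o = ohat := funext ho
  obtain rfl : c = chat := funext hc
  obtain rfl : l = lhat := funext hl
  obtain rfl : u = uhat := funext hu
  have hlu : ∀ j j', κ j = κ j' → l j = l j' ∧ u j = u j' := fun j j' h => (hWconst j j' h).2
  set P : EuclideanSpace ℝ (Fin n) → EuclideanSpace ℝ (Fin n) :=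
    fun y => WithLp.toLp 2 (blockAvg κ y)
  have hobj : ∀ y, ∑ j, c j * P y j = ∑ j, c j * y j :=
    fun y => sum_mul_blockAvg_of_blockConst κ (fun j j' h => (hWconst j j' h).1) y
  have hAA : ∀ y : EuclideanSpace ℝ (Fin n), Feas A b l u o y → Feas A b l u o (P y) :=
    fun y => feas_blockAvg ρ κ hVconst hlu hrow hcol
  have hAAhat : ∀ y : EuclideanSpace ℝ (Fin n), Feas A b l u o y → Feas Ahat b l u o (P y) :=
    fun y => feas_blockAvg ρ κ hVconst hlu
      (fun i i' h q => (hrowhat i q).symm.trans (hrow i i' h q)) hcol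
  have hAhatA : ∀ y : EuclideanSpace ℝ (Fin n), Feas Ahat b l u o y → Feas A b l u o (P y) :=
    fun y => feas_blockAvg ρ κ hVconst hlu
      (fun i i' h q => (hrow i i' h q).trans (hrowhat i' q))
      (fun j j' h p => (hcolhat j p).symm.trans ((hcol j j' h p).trans (hcolhat j' p)))
  obtain ⟨hPx, rfl⟩ := eq_of_isMinOn_norm_of_mapsTo (convex_lpOptimalSet A b c l u o)
    (convex_lpOptimalSet Ahat b c l u o) (norm_toLp_blockAvg_le κ)
    (mapsTo_lpOptimalSet hAA hAA hobj) (mapsTo_lpOptimalSet hAAhat hAhatA hobj)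
    (mapsTo_lpOptimalSet hAhatA hAAhat hobj) ⟨hxfeas, hxopt⟩ ⟨hx'feas, hx'opt⟩
    (isMinOn_iff.2 fun y hy => hxmin y hy.1 hy.2)
    (isMinOn_iff.2 fun y hy => hx'min y hy.1 hy.2)
  refine ⟨rfl, fun j j' h => ?_⟩
  rw [← hPx]
  exact blockAvg_congr κ x h

/-- If two LPs related by a stable partition pair both have finite optimal value,
then their minimal-Euclidean-norm optimal solutions coincide; in particular the
solution is constant on each column block of the stable partition. -/
theorem stmt6 {m n s t : ℕ}
    (A Ahat : Fin m → Fin n → ℝ) (b bhat : Fin m → ℝ)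
    (c chat l lhat u uhat : Fin n → ℝ) (o ohat : Fin m → Ordering)
    (ρ : Fin m → Fin s) (κ : Fin n → Fin t)
    (hρ : Function.Surjective ρ) (hκ : Function.Surjective κ)
    (hb : ∀ i, b i = bhat i) (ho : ∀ i, o i = ohat i)
    (hVconst : ∀ i i', ρ i = ρ i' → b i = b i' ∧ o i = o i')
    (hc : ∀ j, c j = chat j) (hl : ∀ j, l j = lhat j) (hu : ∀ j, u j = uhat j)
    (hWconst : ∀ j j', κ j = κ j' → c j = c j' ∧ l j = l j' ∧ u j = u j')
    (hrow : ∀ i i', ρ i = ρ i' → ∀ q,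
      ∑ j ∈ Finset.univ.filter (fun j => κ j = q), A i j =
      ∑ j ∈ Finset.univ.filter (fun j => κ j = q), A i' j)
    (hrowhat : ∀ i q,
      ∑ j ∈ Finset.univ.filter (fun j => κ j = q), A i j =
      ∑ j ∈ Finset.univ.filter (fun j => κ j = q), Ahat i j)
    (hcol : ∀ j j', κ j = κ j' → ∀ p,
      ∑ i ∈ Finset.univ.filter (fun i => ρ i = p), A i j =
      ∑ i ∈ Finset.univ.filter (fun i => ρ i = p), A i j')
    (hcolhat : ∀ j p,
      ∑ i ∈ Finset.univ.filter (fun i => ρ i = p), A i j =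
      ∑ i ∈ Finset.univ.filter (fun i => ρ i = p), Ahat i j)
    (x x' : EuclideanSpace ℝ (Fin n))
    (hxfeas : Feas A b l u o x)
    (hxopt : ∀ y : EuclideanSpace ℝ (Fin n), Feas A b l u o y →
      ∑ j, c j * x j ≤ ∑ j, c j * y j)
    (hxmin : ∀ y : EuclideanSpace ℝ (Fin n), Feas A b l u o y →
      (∀ z : EuclideanSpace ℝ (Fin n), Feas A b l u o z →
        ∑ j, c j * y j ≤ ∑ j, c j * z j) → ‖x‖ ≤ ‖y‖)
    (hx'feas : Feas Ahat bhat lhat uhat ohat x')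
    (hx'opt : ∀ y : EuclideanSpace ℝ (Fin n), Feas Ahat bhat lhat uhat ohat y →
      ∑ j, chat j * x' j ≤ ∑ j, chat j * y j)
    (hx'min : ∀ y : EuclideanSpace ℝ (Fin n), Feas Ahat bhat lhat uhat ohat y →
      (∀ z : EuclideanSpace ℝ (Fin n), Feas Ahat bhat lhat uhat ohat z →
        ∑ j, chat j * y j ≤ ∑ j, chat j * z j) → ‖x'‖ ≤ ‖y‖) :
    x = x' ∧ ∀ j j', κ j = κ j' → x j = x j' :=
  stmt6_general A Ahat b bhat c chat l lhat u uhat o ohat ρ κ hb ho hVconst hc hl hu hWconst hrow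
    hrowhat hcol hcolhat x x' hxfeas hxopt hxmin hx'feas hx'opt hx'min
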